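/- arXiv:1003.3400 — 3 statements merged into one kernel-verified Lean document; each statement's English description precedes it below -/
import Mathlib

section
/- The function φ(λ¹, λ²) = (1 + λ¹ + λ² − 3λ¹λ²) / (3 − λ¹ − λ² − λ¹λ²) satisfies |φ(λ¹, λ²)| ≤ 1 for all (λ¹, λ²) in the open bidisk 𝔻². -/
open Complex

/-- The rational inner function φ is bounded by 1 on the open bidisk. -/
theorem stmt_2 :
    ∀ z w : ℂ, ‖z‖ < 1 → ‖w‖ < 1 →
      ‖(1 + z + w - 3 * z * w) / (3 - z - w - z * w)‖ ≤ 1 := by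
  intro z w hz hw
  have hz2 : z.re ^ 2 + z.im ^ 2 < 1 := by
    have := Complex.sq_norm z
    nlinarith [norm_nonneg z, Complex.normSq_apply z]
  have hw2 : w.re ^ 2 + w.im ^ 2 < 1 := by
    have := Complex.sq_norm w
    nlinarith [norm_nonneg w, Complex.normSq_apply w]
  have key : ‖1 + z + w - 3 * z * w‖ ≤ ‖3 - z - w - z * w‖ := by
    have h1 : Complex.normSq (1 + z + w - 3 * z * w) ≤
        Complex.normSq (3 - z - w - z * w) := by
      simp only [Complex.normSq_apply, Complex.add_re, Complex.add_im, Complex.sub_re,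
        Complex.sub_im, Complex.mul_re, Complex.mul_im, Complex.one_re, Complex.one_im,
        Complex.re_ofNat, Complex.im_ofNat]
      nlinarith [sq_nonneg (1 - z.re), sq_nonneg z.im, sq_nonneg (1 - w.re), sq_nonneg w.im,
        mul_nonneg (sub_nonneg.2 hz2.le) (sub_nonneg.2 hw2.le),
        mul_nonneg (mul_nonneg (sub_nonneg.2 hz2.le) (sq_nonneg (1 - w.re)))
          (sub_nonneg.2 hw2.le),
        sq_nonneg ((1 - z.re ^ 2 - z.im ^ 2) - (1 - w.re ^ 2 - w.im ^ 2))]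
    calc ‖1 + z + w - 3 * z * w‖
        = Real.sqrt (Complex.normSq (1 + z + w - 3 * z * w)) := rfl
      _ ≤ Real.sqrt (Complex.normSq (3 - z - w - z * w)) := Real.sqrt_le_sqrt h1
      _ = ‖3 - z - w - z * w‖ := rfl
  rw [norm_div]
  rcases eq_or_lt_of_le (norm_nonneg (3 - z - w - z * w)) with h | h
  · rw [← h]
    simp
  · rw [div_le_one h]
    exact key
end

section
/- The function ψ(λ¹, λ²) = (2λ¹λ² − λ¹ − λ²) / (2 − λ¹ − λ²) satisfies |ψ(λ)| ≤ 1 for all λ in the open bidisk 𝔻², and ψ(1, λ²) = −1 for every λ² ∈ 𝔻. -/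
open Complex

/-- ψ is bounded by 1 on the open bidisk, and ψ(1, λ²) = −1 for λ² in the disk. -/
theorem stmt_5 :
    (∀ z w : ℂ, ‖z‖ < 1 → ‖w‖ < 1 →
      ‖(2 * z * w - z - w) / (2 - z - w)‖ ≤ 1) ∧
    (∀ w : ℂ, ‖w‖ < 1 →
      (2 * 1 * w - 1 - w) / (2 - 1 - w) = -1) := by
  constructor
  · intro z w hz hw
    have hz1 : z.re ^ 2 + z.im ^ 2 < 1 := by
      have h := Complex.sq_norm z
      rw [Complex.normSq_apply] at h
      nlinarith [norm_nonneg z]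
    have hw1 : w.re ^ 2 + w.im ^ 2 < 1 := by
      have h := Complex.sq_norm w
      rw [Complex.normSq_apply] at h
      nlinarith [norm_nonneg w]
    have hq : (2 : ℂ) - z - w ≠ 0 := by
      intro h
      have : (2 : ℂ) = z + w := by linear_combination h
      have habs : ‖z + w‖ < 2 := by
        calc ‖z + w‖ ≤ ‖z‖ + ‖w‖ :=
              norm_add_le z w
          _ < 2 := by linarith
      rw [← this] at habs
      simp at habs
    have hqpos : 0 < ‖2 - z - w‖ :=
      norm_pos_iff.mpr hq
    rw [norm_div, div_le_one hqpos]
    have hns : Complex.normSq (2 * z * w - z - w) ≤ Complex.normSq (2 - z - w) := by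
      simp only [Complex.normSq_apply, Complex.sub_re, Complex.sub_im, Complex.mul_re,
        Complex.mul_im, Complex.re_ofNat, Complex.im_ofNat]
      nlinarith [mul_nonneg (by positivity : (0:ℝ) ≤ (1 - z.re) ^ 2 + z.im ^ 2)
          (by nlinarith : (0:ℝ) ≤ 1 - w.re ^ 2 - w.im ^ 2),
        mul_nonneg (by positivity : (0:ℝ) ≤ (1 - w.re) ^ 2 + w.im ^ 2)
          (by nlinarith : (0:ℝ) ≤ 1 - z.re ^ 2 - z.im ^ 2)]
    rw [Complex.norm_def, Complex.norm_def]
    exact Real.sqrt_le_sqrt hns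
  · intro w hw
    have hw1 : w ≠ 1 := by
      intro h; rw [h] at hw; simp at hw
    have : (2 : ℂ) - 1 - w ≠ 0 := by
      intro h
      apply hw1
      linear_combination -h
    field_simp
    ring
end

section
/- For the rational function ψ(λ¹, λ²) = (2λ¹λ² − λ¹ − λ²)/(2 − λ¹ − λ²), and any σ² ∈ 𝔻, the limit liminf over λ ∈ 𝔻² approaching (1, σ²) of (1 − |ψ(λ)|)/(1 − ‖λ‖) is finite; concretely, along λ = (1 − t, σ²), the quotient (1 − |ψ(1 − t, σ²)|)/t is bounded as t → 0⁺. -/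
open Complex Filter Set

/-- Along λ = (1 − t, σ²), the Carathéodory quotient of ψ is bounded as t → 0⁺,
so (1, σ²) is a B-point for ψ. -/
theorem stmt_14 (σ2 : ℂ) (hσ : ‖σ2‖ < 1) :
    ∃ K : ℝ, ∀ᶠ t : ℝ in nhdsWithin 0 (Ioi 0),
      (1 - ‖(2 * (1 - (t : ℂ)) * σ2 - (1 - (t : ℂ)) - σ2) /
        (2 - (1 - (t : ℂ)) - σ2)‖) / t ≤ K := by
  set a : ℝ := ‖1 - σ2‖ with ha_def
  set b : ℝ := ‖1 - 2 * σ2‖ with hb_def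
  have hb0 : 0 ≤ b := norm_nonneg _
  have ha : 0 < a := by
    rw [ha_def]
    apply norm_pos_iff.mpr
    intro h
    have : σ2 = 1 := by linear_combination -h
    rw [this] at hσ
    simp at hσ
  refine ⟨(1 + b) / a, ?_⟩
  have hpos : 0 < a / (b + 1) := by positivity
  filter_upwards [Ioo_mem_nhdsGT_of_mem (by constructor <;> simp [hpos] : (0:ℝ) ∈ Ico 0 (a / (b + 1)))] with t ht
  obtain ⟨ht0, ht1⟩ := ht
  have htb : t * (b + 1) < a := by
    rw [div_eq_mul_inv] at ht1
    calc t * (b + 1) < a / (b + 1) * (b + 1) := by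
          apply mul_lt_mul_of_pos_right ht1; positivity
      _ = a := by field_simp
  set N : ℂ := 2 * (1 - (t : ℂ)) * σ2 - (1 - (t : ℂ)) - σ2 with hN_def
  set D : ℂ := 2 - (1 - (t : ℂ)) - σ2 with hD_def
  have hNeq : N - (t : ℂ) * (1 - 2 * σ2) = σ2 - 1 := by rw [hN_def]; ring
  have hDeq : D = (1 - σ2) + (t : ℂ) := by rw [hD_def]; ring
  -- |N| ≥ a - t*b
  have hNlow : a - t * b ≤ ‖N‖ := by
    have h1 : a = ‖N - (t : ℂ) * (1 - 2 * σ2)‖ := by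
      rw [hNeq, ha_def, norm_sub_rev]
    have h2 : ‖N - (t : ℂ) * (1 - 2 * σ2)‖ ≤
        ‖N‖ + ‖(t : ℂ) * (1 - 2 * σ2)‖ :=
      norm_sub_le _ _
    have h3 : ‖(t : ℂ) * (1 - 2 * σ2)‖ = t * b := by
      rw [norm_mul, Complex.norm_real, Real.norm_eq_abs, abs_of_pos ht0, hb_def]
    linarith [h1 ▸ h2, h3 ▸ le_refl (‖N‖ + ‖(t:ℂ) * (1 - 2*σ2)‖)]
  -- |D| ≤ a + t
  have hDup : ‖D‖ ≤ a + t := by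
    calc ‖D‖ ≤ ‖1 - σ2‖ + ‖(t : ℂ)‖ := by
          rw [hDeq]; exact norm_add_le _ _
      _ = a + t := by rw [Complex.norm_real, Real.norm_eq_abs, abs_of_pos ht0, ha_def]
  -- |D| > 0
  have hDpos : 0 < ‖D‖ := by
    have h1 : a - t ≤ ‖D‖ := by
      have h2 : a = ‖D - (t : ℂ)‖ := by
        rw [hDeq, ha_def]; congr 1; ring
      have h3 : ‖D - (t : ℂ)‖ ≤ ‖D‖ + ‖(t : ℂ)‖ :=
        norm_sub_le _ _
      rw [Complex.norm_real, Real.norm_eq_abs, abs_of_pos ht0] at h3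
      linarith [h2 ▸ le_refl a]
    have : t < a := by nlinarith
    linarith
  have hnn0 : 0 ≤ ‖N‖ := norm_nonneg _
  rw [norm_div, div_le_div_iff₀ ht0 ha]
  -- goal : (1 - |N|/|D|) * a ≤ (1+b) * t
  set q : ℝ := ‖N‖ / ‖D‖ with hq_def
  have hq0 : 0 ≤ q := by positivity
  have hqd : ‖N‖ = q * ‖D‖ := by
    rw [hq_def]; field_simp
  have hqle : q * ‖D‖ ≤ q * (a + t) := mul_le_mul_of_nonneg_left hDup hq0
  rcases le_or_gt q 1 with hq1 | hq1
  · nlinarith [hqd ▸ hNlow, hqle, mul_le_mul_of_nonneg_right hq1 (le_of_lt ht0)]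
  · nlinarith
end
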